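/- Interpolation bound for the completeness defect: let V, X, W be real normed vector spaces with continuous linear maps ι_X : V → X and ι_W : V → W, let 𝓛 = {l₁, …, l_N} be continuous linear functionals on V, and let θ ∈ (0, 1] and a > 0 be such that ‖ι_W u‖_W ≤ a · ‖ι_X u‖_X^θ · ‖u‖_V^{1−θ} for all u ∈ V. Then the completeness defects satisfy ε_𝓛(V, W) ≤ a · (ε_𝓛(V, X))^θ. -/
import Mathlib


/-- Interpolation bound for the completeness defect: let `ι_X : V → X` and
`ι_W : V → W` be continuous linear maps between real normed spaces,
`l₁, …, l_N` continuous linear functionals on `V`, `θ ∈ (0, 1]` and `a > 0` with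
`‖ι_W u‖ ≤ a ‖ι_X u‖^θ ‖u‖^{1−θ}` for all `u ∈ V`. Then the completeness defects
`ε_𝓛(V, W) = sup { ‖ι_W w‖ : ‖w‖ ≤ 1, l_j(w) = 0 ∀ j }` and
`ε_𝓛(V, X) = sup { ‖ι_X w‖ : ‖w‖ ≤ 1, l_j(w) = 0 ∀ j }` satisfy
`ε_𝓛(V, W) ≤ a · (ε_𝓛(V, X))^θ`. -/
theorem completeness_defect_interpolation
    {V X W : Type*} [NormedAddCommGroup V] [NormedSpace ℝ V]
    [NormedAddCommGroup X] [NormedSpace ℝ X]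
    [NormedAddCommGroup W] [NormedSpace ℝ W]
    (ιX : V →L[ℝ] X) (ιW : V →L[ℝ] W) (N : ℕ) (l : Fin N → (V →L[ℝ] ℝ))
    (θ a : ℝ) (hθ0 : 0 < θ) (hθ1 : θ ≤ 1) (ha : 0 < a)
    (hint : ∀ u : V, ‖ιW u‖ ≤ a * ‖ιX u‖ ^ θ * ‖u‖ ^ (1 - θ))
    (εX εW : ℝ)
    (hεX : εX = sSup {r : ℝ | ∃ w : V, ‖w‖ ≤ 1 ∧ (∀ j, l j w = 0) ∧ r = ‖ιX w‖})
    (hεW : εW = sSup {r : ℝ | ∃ w : V, ‖w‖ ≤ 1 ∧ (∀ j, l j w = 0) ∧ r = ‖ιW w‖}) :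
    εW ≤ a * εX ^ θ := by
  have hbddX : BddAbove {r : ℝ | ∃ w : V, ‖w‖ ≤ 1 ∧ (∀ j, l j w = 0) ∧ r = ‖ιX w‖} := by
    refine ⟨‖ιX‖, ?_⟩
    rintro r ⟨w, hw1, _, rfl⟩
    calc ‖ιX w‖ ≤ ‖ιX‖ * ‖w‖ := ιX.le_opNorm w
    _ ≤ ‖ιX‖ * 1 := by
        exact mul_le_mul_of_nonneg_left hw1 (norm_nonneg _)
    _ = ‖ιX‖ := mul_one _
  have h0X : (0 : ℝ) ∈ {r : ℝ | ∃ w : V, ‖w‖ ≤ 1 ∧ (∀ j, l j w = 0) ∧ r = ‖ιX w‖} :=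
    ⟨0, by simp⟩
  have hεX0 : 0 ≤ εX := hεX ▸ le_csSup hbddX h0X
  rw [hεW]
  apply Real.sSup_le
  · rintro r ⟨w, hw1, hwl, rfl⟩
    have hX : ‖ιX w‖ ≤ εX := hεX ▸ le_csSup hbddX ⟨w, hw1, hwl, rfl⟩
    calc ‖ιW w‖ ≤ a * ‖ιX w‖ ^ θ * ‖w‖ ^ (1 - θ) := hint w
    _ ≤ a * εX ^ θ * 1 := by
        apply mul_le_mul
        · exact mul_le_mul_of_nonneg_left
            (Real.rpow_le_rpow (norm_nonneg _) hX hθ0.le) ha.le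
        · exact Real.rpow_le_one (norm_nonneg _) hw1 (by linarith)
        · exact Real.rpow_nonneg (norm_nonneg _) _
        · positivity
    _ = a * εX ^ θ := mul_one _
  · positivity
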